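/- arXiv:2412.17435 — 6 statements merged into one kernel-verified Lean document; each statement's English description precedes it below -/
import Mathlib

section
/- For a finite ensemble of bipartite states E = {(η_i, ρ_i)}_{i∈Λ} and any measurement (POVM) {M_i}_{i∈Λ} consisting of separable operators, if η₁ρ₁ − η_iρ_i ∈ SEP* for all i ∈ Λ, then the success probability Σ_i η_i Tr(ρ_i M_i) is at most η₁. -/
open Matrix
open scoped ComplexOrder

/-- Hermitian operators on the bipartite space `ℂ^dA ⊗ ℂ^dB`, modeled as matrices
indexed by `Fin dA × Fin dB`. -/
abbrev Mat (dA dB : ℕ) := Matrix (Fin dA × Fin dB) (Fin dA × Fin dB) ℂ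

/-- A bipartite operator is separable if it is a finite sum of Kronecker products of
positive-semidefinite operators on the two factors. -/
def IsSep {dA dB : ℕ} (E : Mat dA dB) : Prop :=
  ∃ (n : ℕ) (A : Fin n → Matrix (Fin dA) (Fin dA) ℂ)
    (B : Fin n → Matrix (Fin dB) (Fin dB) ℂ),
    (∀ l, (A l).PosSemidef) ∧ (∀ l, (B l).PosSemidef) ∧
      E = ∑ l, Matrix.kroneckerMap (· * ·) (A l) (B l)

/-- Membership in the dual cone `SEP*` (block positivity): Hermitian with
`Tr(E F) ≥ 0` for every separable `F`. -/
def InSEPdual {dA dB : ℕ} (E : Mat dA dB) : Prop :=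
  E.IsHermitian ∧ ∀ F : Mat dA dB, IsSep F → 0 ≤ (E * F).trace

theorem sep_povm_success_le {dA dB : ℕ} {ι : Type*} [Fintype ι]
    (η : ι → ℝ) (ρ : ι → Mat dA dB) (a : ι)
    (hη : ∀ i, 0 ≤ η i) (hsum : ∑ i, η i = 1)
    (hρ : ∀ i, (ρ i).PosSemidef ∧ (ρ i).trace = 1)
    (M : ι → Mat dA dB) (hMsep : ∀ i, IsSep (M i)) (hMsum : ∑ i, M i = 1)
    (hdual : ∀ i, InSEPdual ((η a : ℂ) • ρ a - (η i : ℂ) • ρ i)) :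
    ∑ i, η i * ((ρ i * M i).trace).re ≤ η a := by
  have key : ∀ i, η i * ((ρ i * M i).trace).re ≤ η a * ((ρ a * M i).trace).re := by
    intro i
    have h := (hdual i).2 (M i) (hMsep i)
    rw [sub_mul, Matrix.smul_mul, Matrix.smul_mul, Matrix.trace_sub,
      Matrix.trace_smul, Matrix.trace_smul] at h
    have hre := (Complex.le_def.mp h).1
    simp only [Complex.zero_re, Complex.sub_re, smul_eq_mul, Complex.mul_re, Complex.ofReal_re, Complex.ofReal_im, zero_mul, sub_zero] at hre
    linarith
  have hsumtr : ∑ i, ((ρ a * M i).trace).re = 1 := by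
    have h1 : ∑ i, (ρ a * M i).trace = 1 := by
      rw [← Matrix.trace_sum, ← Matrix.mul_sum, hMsum, mul_one, (hρ a).2]
    calc ∑ i, ((ρ a * M i).trace).re = (∑ i, (ρ a * M i).trace).re := by
          rw [Complex.re_sum]
      _ = 1 := by rw [h1]; simp
  calc ∑ i, η i * ((ρ i * M i).trace).re
      ≤ ∑ i, η a * ((ρ a * M i).trace).re := Finset.sum_le_sum fun i _ => key i
    _ = η a * (∑ i, ((ρ a * M i).trace).re) := by rw [Finset.mul_sum]
    _ = η a := by rw [hsumtr, mul_one]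
end

section
/- For a finite ensemble E = {(η_i, ρ_i)}_{i∈Λ}, if η₁ρ₁ − η_iρ_i is positive semidefinite for all i ∈ Λ, then for every POVM {M_i}_{i∈Λ} the success probability Σ_i η_i Tr(ρ_i M_i) is at most η₁, and this bound is attained (so p_G(E) = η₁, achieved by the POVM with M₁ = 1). -/
open Matrix
open scoped ComplexOrder

/-! If `η_a ρ_a - η_i ρ_i ≥ 0` and `M_i ≥ 0`, then `Tr((η_a ρ_a - η_i ρ_i) M_i) ≥ 0`, so each
term `η_i Tr(ρ_i M_i)` is at most `η_a Tr(ρ_a M_i)`; summing over `i` with `∑ M_i = 1` gives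
`η_a Tr ρ_a = η_a`. The measurement `M_a = 1`, `M_i = 0` otherwise, attains the bound. -/

namespace Matrix

variable {𝕜 m : Type*} [RCLike 𝕜] [Fintype m]

theorem PosSemidef.trace_mul_nonneg {A B : Matrix m m 𝕜} (hA : A.PosSemidef)
    (hB : B.PosSemidef) : 0 ≤ (A * B).trace := by
  obtain ⟨C, rfl⟩ : ∃ C : Matrix m m 𝕜, A = star C * C := by
    classical
    open scoped MatrixOrder Matrix.Norms.L2Operator in
    exact CStarAlgebra.nonneg_iff_eq_star_mul_self.mp (nonneg_iff_posSemidef.mpr hA)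
  rw [Matrix.mul_assoc, trace_mul_comm]
  exact (hB.mul_mul_conjTranspose_same C).trace_nonneg

theorem PosSemidef.re_trace_mul_le_of_sub {A B M : Matrix m m 𝕜} (hAB : (A - B).PosSemidef)
    (hM : M.PosSemidef) : RCLike.re (B * M).trace ≤ RCLike.re (A * M).trace := by
  have h := (RCLike.nonneg_iff.mp (hAB.trace_mul_nonneg hM)).1
  rw [Matrix.sub_mul, trace_sub, map_sub] at h
  exact sub_nonneg.mp h

theorem sum_re_trace_mul_le_of_posSemidef_sub [DecidableEq m] {ι : Type*} [Fintype ι]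
    {A : Matrix m m 𝕜} {B M : ι → Matrix m m 𝕜} (hAB : ∀ i, (A - B i).PosSemidef)
    (hM : ∀ i, (M i).PosSemidef)
    (hM_sum : ∑ i, M i = 1) : ∑ i, RCLike.re (B i * M i).trace ≤ RCLike.re A.trace :=
  calc ∑ i, RCLike.re (B i * M i).trace
      ≤ ∑ i, RCLike.re (A * M i).trace :=
        Finset.sum_le_sum fun i _ ↦ (hAB i).re_trace_mul_le_of_sub (hM i)
    _ = RCLike.re A.trace := by
        rw [← map_sum, ← trace_sum, ← Matrix.mul_sum, hM_sum, Matrix.mul_one]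

end Matrix

theorem psd_dominance_povm_bound_general {n : ℕ} {ι : Type*} [Fintype ι] [DecidableEq ι]
    (η : ι → ℝ) (ρ : ι → Matrix (Fin n) (Fin n) ℂ) (a : ι)
    (hρ : ∀ i, (ρ i).PosSemidef ∧ (ρ i).trace = 1)
    (hpsd : ∀ i, ((η a : ℂ) • ρ a - (η i : ℂ) • ρ i).PosSemidef) :
    (∀ M : ι → Matrix (Fin n) (Fin n) ℂ,
        (∀ i, (M i).PosSemidef) → ∑ i, M i = 1 →
        ∑ i, η i * ((ρ i * M i).trace).re ≤ η a) ∧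
    (∃ M : ι → Matrix (Fin n) (Fin n) ℂ,
        (∀ i, (M i).PosSemidef) ∧ ∑ i, M i = 1 ∧
        ∑ i, η i * ((ρ i * M i).trace).re = η a) := by
  constructor
  · intro M hM hM_sum
    calc ∑ i, η i * (ρ i * M i).trace.re
        = ∑ i, RCLike.re (((η i : ℂ) • ρ i) * M i).trace := by simp [trace_smul]
      _ ≤ RCLike.re ((η a : ℂ) • ρ a).trace :=
        sum_re_trace_mul_le_of_posSemidef_sub hpsd hM hM_sum
      _ = η a := by simp [trace_smul, (hρ a).2]
  · refine ⟨Pi.single a 1, fun i ↦ ?_, by simp, ?_⟩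
    · rcases eq_or_ne i a with rfl | hi
      · simpa using PosSemidef.one
      · simpa [hi] using PosSemidef.zero
    · rw [Fintype.sum_eq_single a fun i hi ↦ by simp [hi]]
      simp [(hρ a).2]

theorem psd_dominance_povm_bound {n : ℕ} {ι : Type*} [Fintype ι] [DecidableEq ι]
    (η : ι → ℝ) (ρ : ι → Matrix (Fin n) (Fin n) ℂ) (a : ι)
    (hη : ∀ i, 0 ≤ η i) (hsum : ∑ i, η i = 1)
    (hρ : ∀ i, (ρ i).PosSemidef ∧ (ρ i).trace = 1)
    (hpsd : ∀ i, ((η a : ℂ) • ρ a - (η i : ℂ) • ρ i).PosSemidef) :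
    (∀ M : ι → Matrix (Fin n) (Fin n) ℂ,
        (∀ i, (M i).PosSemidef) → ∑ i, M i = 1 →
        ∑ i, η i * ((ρ i * M i).trace).re ≤ η a) ∧
    (∃ M : ι → Matrix (Fin n) (Fin n) ℂ,
        (∀ i, (M i).PosSemidef) ∧ ∑ i, M i = 1 ∧
        ∑ i, η i * ((ρ i * M i).trace).re = η a) :=
  psd_dominance_povm_bound_general η ρ a hρ hpsd
end

section
/- Suppose η₁ρ₁ − η_iρ_i ∈ SEP* for all i ∈ Λ, and some η₁ρ₁ − η_jρ_j is an entanglement witness (i.e., lies in SEP* but is not positive semidefinite). Then there exists a POVM whose success probability on the ensemble strictly exceeds η₁; consequently p_SEP(E) = η₁ < p_G(E). -/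
/-!
Write `W i = η a • ρ a - η i • ρ i`. Since `Tr ρ a = 1` and `∑ M i = 1`, every POVM `M` succeeds
with probability `η a - ∑ i, Re Tr (W i * M i)`. For separable `M` each term is nonnegative
because `W i ∈ SEP*`. If `W j` is not positive semidefinite, it has a unit eigenvector `v` with a
negative eigenvalue; measuring `P = |v⟩⟨v|` for outcome `j` and `1 - P` for outcome `a` makes
the sum equal to `⟨v| W j |v⟩ < 0`, because `W a = 0`.
-/

open Matrix
open scoped ComplexOrder

namespace Matrix

variable {n : Type*} [Fintype n]

theorem trace_mul_vecMulVec {R : Type*} [CommSemiring R] (A : Matrix n n R) (x y : n → R) :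
    (A * vecMulVec x y).trace = y ⬝ᵥ A *ᵥ x := by
  rw [mul_vecMulVec, trace_vecMulVec, dotProduct_comm]

theorem PosSemidef.of_isHermitian_of_mul_self_eq {R : Type*} [CommRing R] [PartialOrder R]
    [StarRing R] [StarOrderedRing R] {Q : Matrix n n R} (hQ : Q.IsHermitian) (hQQ : Q * Q = Q) :
    Q.PosSemidef := by
  simpa [hQ.eq, hQQ] using posSemidef_conjTranspose_mul_self Q

variable [DecidableEq n]

theorem posSemidef_one_sub_vecMulVec {R : Type*} [CommRing R] [PartialOrder R] [StarRing R]
    [StarOrderedRing R] {v : n → R} (hv : star v ⬝ᵥ v = 1) :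
    (1 - vecMulVec v (star v)).PosSemidef := by
  refine .of_isHermitian_of_mul_self_eq ?_ ?_
  · exact isHermitian_one.sub (posSemidef_vecMulVec_self_star v).isHermitian
  · rw [sub_mul, mul_sub, mul_sub, vecMulVec_mul_vecMulVec, hv]
    simp

theorem IsHermitian.exists_unit_re_dotProduct_mulVec_neg {𝕜 : Type*} [RCLike 𝕜]
    {W : Matrix n n 𝕜} (hW : W.IsHermitian) (h : ¬ W.PosSemidef) :
    ∃ v : n → 𝕜, star v ⬝ᵥ v = 1 ∧ RCLike.re (star v ⬝ᵥ W *ᵥ v) < 0 := by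
  obtain ⟨k, hk⟩ : ∃ k, hW.eigenvalues k < 0 := by
    simpa [hW.posSemidef_iff_eigenvalues_nonneg, Pi.le_def] using h
  refine ⟨hW.eigenvectorBasis k, ?_, by simpa [hW.eigenvalues_eq k] using hk⟩
  have hunit := inner_self_eq_norm_sq_to_K (𝕜 := 𝕜) (hW.eigenvectorBasis k)
  rw [hW.eigenvectorBasis.orthonormal.1 k, EuclideanSpace.inner_eq_star_dotProduct,
    dotProduct_comm] at hunit
  simpa using hunit

end Matrix

section Discrimination

variable {n ι : Type*} [Fintype n] [DecidableEq n] [Fintype ι]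

theorem sum_mul_re_trace_eq_sub_sum (η : ι → ℝ) (ρ M : ι → Matrix n n ℂ) {a : ι}
    (hρa : (ρ a).trace = 1) (hM : ∑ i, M i = 1) :
    ∑ i, η i * (ρ i * M i).trace.re =
      η a - ∑ i, ((((η a : ℂ) • ρ a - (η i : ℂ) • ρ i) * M i).trace).re := by
  have hc : ∑ i, (((η a : ℂ) • ρ a - (η i : ℂ) • ρ i) * M i).trace =
      η a - ∑ i, (η i : ℂ) * (ρ i * M i).trace := by
    simp only [sub_mul, smul_mul, trace_sub, trace_smul, smul_eq_mul, Finset.sum_sub_distrib,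
      ← Finset.mul_sum, ← trace_sum, hM, mul_one, hρa]
  rw [← Complex.re_sum, hc]
  simp [Complex.re_sum]

theorem exists_posSemidef_povm_sum_mul_re_trace_gt [DecidableEq ι] (η : ι → ℝ)
    (ρ : ι → Matrix n n ℂ) {a : ι} (hρa : (ρ a).trace = 1) {j : ι}
    (hW : ((η a : ℂ) • ρ a - (η j : ℂ) • ρ j).IsHermitian)
    (hW' : ¬ ((η a : ℂ) • ρ a - (η j : ℂ) • ρ j).PosSemidef) :
    ∃ M : ι → Matrix n n ℂ, (∀ i, (M i).PosSemidef) ∧ ∑ i, M i = 1 ∧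
      η a < ∑ i, η i * ((ρ i * M i).trace).re := by
  obtain ⟨v, hv, hneg⟩ := hW.exists_unit_re_dotProduct_mulVec_neg hW'
  rw [RCLike.re_to_complex] at hneg
  set P := vecMulVec v (star v)
  set M : ι → Matrix n n ℂ := Pi.single j P + Pi.single a (1 - P)
  have hM : ∑ i, M i = 1 := by
    simp [M, Finset.sum_add_distrib]
  refine ⟨M, fun i => ?_, hM, ?_⟩
  · have single_psd {k : ι} {Q : Matrix n n ℂ} (hQ : Q.PosSemidef) :
        (Pi.single (M := fun _ => Matrix n n ℂ) k Q i).PosSemidef := by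
      rcases eq_or_ne i k with rfl | h
      · simpa using hQ
      · simpa [h] using PosSemidef.zero
    exact (single_psd (posSemidef_vecMulVec_self_star v)).add
      (single_psd (posSemidef_one_sub_vecMulVec hv))
  · have hval : ∑ i, ((((η a : ℂ) • ρ a - (η i : ℂ) • ρ i) * M i).trace).re =
        (star v ⬝ᵥ ((η a : ℂ) • ρ a - (η j : ℂ) • ρ j) *ᵥ v).re := by
      simp [M, P, mul_add, Pi.single_apply, Finset.sum_add_distrib, apply_ite trace,
        apply_ite Complex.re, trace_mul_vecMulVec]
    rw [sum_mul_re_trace_eq_sub_sum η ρ _ hρa hM, hval]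
    linarith

theorem sum_mul_re_trace_le_of_isSep {dA dB : ℕ} (η : ι → ℝ)
    (ρ M : ι → Mat dA dB) {a : ι} (hρa : (ρ a).trace = 1)
    (hdual : ∀ i, InSEPdual ((η a : ℂ) • ρ a - (η i : ℂ) • ρ i))
    (hsep : ∀ i, IsSep (M i)) (hM : ∑ i, M i = 1) :
    ∑ i, η i * ((ρ i * M i).trace).re ≤ η a := by
  rw [sum_mul_re_trace_eq_sub_sum η ρ M hρa hM, sub_le_self_iff]
  exact Finset.sum_nonneg fun i _ => (Complex.nonneg_iff.mp ((hdual i).2 _ (hsep i))).1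

end Discrimination

theorem ew_gives_nonlocality_general {dA dB : ℕ} {ι : Type*} [Fintype ι] [DecidableEq ι]
    (η : ι → ℝ) (ρ : ι → Mat dA dB) (a : ι)
    (hρ : ∀ i, (ρ i).PosSemidef ∧ (ρ i).trace = 1)
    (hdual : ∀ i, InSEPdual ((η a : ℂ) • ρ a - (η i : ℂ) • ρ i))
    (j : ι)
    (hEW : InSEPdual ((η a : ℂ) • ρ a - (η j : ℂ) • ρ j) ∧
      ¬ ((η a : ℂ) • ρ a - (η j : ℂ) • ρ j).PosSemidef) :
    (∃ M : ι → Mat dA dB, (∀ i, (M i).PosSemidef) ∧ ∑ i, M i = 1 ∧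
      η a < ∑ i, η i * ((ρ i * M i).trace).re) ∧
    (∀ M : ι → Mat dA dB, (∀ i, IsSep (M i)) → ∑ i, M i = 1 →
      ∑ i, η i * ((ρ i * M i).trace).re ≤ η a) :=
  ⟨exists_posSemidef_povm_sum_mul_re_trace_gt η ρ (hρ a).2 hEW.1.1 hEW.2,
    fun M hsep hM => sum_mul_re_trace_le_of_isSep η ρ M (hρ a).2 hdual hsep hM⟩

theorem ew_gives_nonlocality {dA dB : ℕ} {ι : Type*} [Fintype ι] [DecidableEq ι]
    (η : ι → ℝ) (ρ : ι → Mat dA dB) (a : ι)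
    (hη : ∀ i, 0 ≤ η i) (hsum : ∑ i, η i = 1)
    (hρ : ∀ i, (ρ i).PosSemidef ∧ (ρ i).trace = 1)
    (hdual : ∀ i, InSEPdual ((η a : ℂ) • ρ a - (η i : ℂ) • ρ i))
    (j : ι)
    (hEW : InSEPdual ((η a : ℂ) • ρ a - (η j : ℂ) • ρ j) ∧
      ¬ ((η a : ℂ) • ρ a - (η j : ℂ) • ρ j).PosSemidef) :
    (∃ M : ι → Mat dA dB, (∀ i, (M i).PosSemidef) ∧ ∑ i, M i = 1 ∧
      η a < ∑ i, η i * ((ρ i * M i).trace).re) ∧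
    (∀ M : ι → Mat dA dB, (∀ i, IsSep (M i)) → ∑ i, M i = 1 →
      ∑ i, η i * ((ρ i * M i).trace).re ≤ η a) :=
  ew_gives_nonlocality_general η ρ a hρ hdual j hEW
end

section
/- (PI separable optimality, 'if' direction) Let Ω_S = S × S^c with the averaged ensemble η̃_ω ρ̃_ω = (η_{ω₀}ρ_{ω₀} + η_{ω₁}ρ_{ω₁})/2. If for a fixed μ ∈ Ω_S one has η̃_μ ρ̃_μ − η̃_ω ρ̃_ω ∈ SEP* for all ω ∈ Ω_S, then every separable POVM {M̃_ω}_{ω∈Ω_S} satisfies Σ_ω η̃_ω Tr(ρ̃_ω M̃_ω) ≤ η̃_μ, so p_SEP^PI(E,S) = 2η̃_μ. -/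
open Matrix
open scoped ComplexOrder

theorem pi_sep_optimality_if {dA dB : ℕ}
    (η : Fin 4 → ℝ) (ρ : Fin 4 → Mat dA dB)
    (hη : ∀ i, 0 < η i) (hsum : ∑ i, η i = 1)
    (hρ : ∀ i, (ρ i).PosSemidef ∧ (ρ i).trace = 1)
    (s c : Fin 2 → Fin 4) (hbij : Function.Bijective (Sum.elim s c))
    (ηt : Fin 2 × Fin 2 → ℝ) (ρt : Fin 2 × Fin 2 → Mat dA dB)
    (hηt : ∀ ω, ηt ω = (η (s ω.1) + η (c ω.2)) / 2)
    (hρt : ∀ ω, ρt ω = (((η (s ω.1) + η (c ω.2) : ℝ) : ℂ))⁻¹ •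
        ((η (s ω.1) : ℂ) • ρ (s ω.1) + (η (c ω.2) : ℂ) • ρ (c ω.2)))
    (μ : Fin 2 × Fin 2)
    (hdual : ∀ ω, InSEPdual ((ηt μ : ℂ) • ρt μ - (ηt ω : ℂ) • ρt ω)) :
    (∀ M : Fin 2 × Fin 2 → Mat dA dB, (∀ ω, IsSep (M ω)) → ∑ ω, M ω = 1 →
        ∑ ω, ηt ω * ((ρt ω * M ω).trace).re ≤ ηt μ) ∧
    (∃ M : Fin 2 × Fin 2 → Mat dA dB, (∀ ω, IsSep (M ω)) ∧ (∀ ω, (M ω).PosSemidef) ∧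
        ∑ ω, M ω = 1 ∧ ∑ ω, ηt ω * ((ρt ω * M ω).trace).re = ηt μ) := by
  -- trace of each averaged state is 1
  have htr : ∀ ω, (ρt ω).trace = 1 := by
    intro ω
    have hpos : (0:ℝ) < η (s ω.1) + η (c ω.2) := add_pos (hη _) (hη _)
    have hne : ((η (s ω.1) + η (c ω.2) : ℝ) : ℂ) ≠ 0 := by
      exact_mod_cast hpos.ne'
    rw [hρt ω, trace_smul, trace_add, trace_smul, trace_smul, (hρ _).2, (hρ _).2]
    simp only [smul_eq_mul, mul_one]
    push_cast
    exact inv_mul_cancel₀ (by push_cast at hne; exact hne)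
  -- key pointwise inequality
  have key : ∀ (F : Mat dA dB) (ω : Fin 2 × Fin 2), IsSep F →
      ηt ω * ((ρt ω * F).trace).re ≤ ηt μ * ((ρt μ * F).trace).re := by
    intro F ω hF
    have h := (hdual ω).2 F hF
    rw [Complex.le_def] at h
    have h' := h.1
    rw [sub_mul, trace_sub, smul_mul_assoc, smul_mul_assoc, trace_smul, trace_smul,
      Complex.sub_re, smul_eq_mul, smul_eq_mul, Complex.re_ofReal_mul,
      Complex.re_ofReal_mul, Complex.zero_re] at h'
    linarith
  constructor
  · intro M hsep hsum1
    calc ∑ ω, ηt ω * ((ρt ω * M ω).trace).re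
        ≤ ∑ ω, ηt μ * ((ρt μ * M ω).trace).re :=
          Finset.sum_le_sum (fun ω _ => key (M ω) ω (hsep ω))
      _ = ηt μ := by
          rw [← Finset.mul_sum]
          have : ∑ ω, ((ρt μ * M ω).trace).re = ((ρt μ * ∑ ω, M ω).trace).re := by
            rw [Finset.mul_sum, trace_sum, Complex.re_sum]
          rw [this, hsum1, mul_one, htr μ, Complex.one_re, mul_one]
  · refine ⟨fun ω => if ω = μ then 1 else 0, ?_, ?_, ?_, ?_⟩
    · intro ω
      show IsSep (if ω = μ then 1 else 0)
      by_cases h : ω = μ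
      · rw [if_pos h]
        exact ⟨1, fun _ => 1, fun _ => 1, fun _ => Matrix.PosSemidef.one,
          fun _ => Matrix.PosSemidef.one, by simp [Matrix.one_kronecker_one]⟩
      · rw [if_neg h]
        exact ⟨0, Fin.elim0, Fin.elim0, fun l => l.elim0, fun l => l.elim0, by simp⟩
    · intro ω
      show Matrix.PosSemidef (if ω = μ then 1 else 0)
      by_cases h : ω = μ
      · rw [if_pos h]; exact Matrix.PosSemidef.one
      · rw [if_neg h]; exact Matrix.PosSemidef.zero
    · simp
    · rw [Finset.sum_eq_single μ]
      · simp [htr μ]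
      · intro ω _ hne
        simp [hne]
      · simp
end

section
/- (PI separable optimality, 'only if' direction) With the averaged ensemble {(η̃_ω, ρ̃_ω)}_{ω∈Ω_S}, if η̃_μ ρ̃_μ − η̃_{ω°} ρ̃_{ω°} ∉ SEP* for some ω° ∈ Ω_S, then there exists a separable POVM whose averaged success probability Σ_ω η̃_ω Tr(ρ̃_ω M̃_ω) strictly exceeds η̃_μ; hence p_SEP^PI(E,S) > 2η̃_μ. -/
open Matrix
open scoped ComplexOrder

/-!
Since `ρ̃_μ` and `ρ̃_{ω°}` are Hermitian, failing `SEP*` membership yields a separable `F` with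
`Tr((η̃_μ ρ̃_μ - η̃_{ω°} ρ̃_{ω°}) F) < 0`. Some multiple `t F`, `t > 0`, has a separable
complement `1 - t F`: if `A_l ≤ α_l` and `B_l ≤ β_l`, then
`α_l β_l - A_l ⊗ B_l = (α_l - A_l) ⊗ β_l + A_l ⊗ (β_l - B_l)` is separable, so
`t = (1 + ∑ α_l β_l)⁻¹` works for `F = ∑ A_l ⊗ B_l`. The separable POVM
`M_{ω°} = t F`, `M_μ = 1 - t F` succeeds with probability
`η̃_μ - t Tr((η̃_μ ρ̃_μ - η̃_{ω°} ρ̃_{ω°}) F) > η̃_μ`.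
-/

section ComplexMatrix

variable {n : Type*} {A B : Matrix n n ℂ} {a b : ℝ}

lemma Matrix.IsHermitian.normalized_mixture (hA : A.IsHermitian) (hB : B.IsHermitian) :
    (((a + b : ℝ) : ℂ)⁻¹ • ((a : ℂ) • A + (b : ℂ) • B)).IsHermitian :=
  ((hA.smul (Complex.conj_ofReal a)).add (hB.smul (Complex.conj_ofReal b))).smul
    (IsSelfAdjoint.inv₀ (Complex.conj_ofReal (a + b)))

lemma Matrix.trace_normalized_mixture [Fintype n] (hA : A.trace = 1) (hB : B.trace = 1)
    (hab : a + b ≠ 0) :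
    (((a + b : ℝ) : ℂ)⁻¹ • ((a : ℂ) • A + (b : ℂ) • B)).trace = 1 := by
  rw [trace_smul, trace_add, trace_smul, trace_smul, hA, hB, smul_eq_mul, smul_eq_mul,
    smul_eq_mul, mul_one, mul_one, ← Complex.ofReal_add]
  exact inv_mul_cancel₀ (Complex.ofReal_ne_zero.mpr hab)

open scoped Matrix.Norms.L2Operator MatrixOrder in
lemma Matrix.IsHermitian.exists_posSemidef_smul_one_sub [Fintype n] [DecidableEq n]
    (hA : A.IsHermitian) :
    ∃ α : ℝ, 0 ≤ α ∧ ((α : ℂ) • 1 - A).PosSemidef := by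
  refine ⟨‖A‖, norm_nonneg A, ?_⟩
  have hle := hA.isSelfAdjoint.le_algebraMap_norm_self
  rwa [Algebra.algebraMap_eq_smul_one, ← Complex.coe_smul, Matrix.le_iff] at hle

lemma Matrix.IsHermitian.im_trace_mul_eq_zero [Fintype n] {E F : Matrix n n ℂ}
    (hE : E.IsHermitian) (hF : F.IsHermitian) : (E * F).trace.im = 0 := by
  rw [← Complex.conj_eq_iff_im, ← Complex.star_def, ← trace_conjTranspose, conjTranspose_mul,
    hE.eq, hF.eq, trace_mul_comm]

end ComplexMatrix

section Separable

variable {dA dB : ℕ}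

lemma isSep_zero : IsSep (0 : Mat dA dB) :=
  ⟨0, 0, 0, finZeroElim, finZeroElim, by simp⟩

lemma isSep_kronecker {A : Matrix (Fin dA) (Fin dA) ℂ} {B : Matrix (Fin dB) (Fin dB) ℂ}
    (hA : A.PosSemidef) (hB : B.PosSemidef) : IsSep (kroneckerMap (· * ·) A B) :=
  ⟨1, fun _ => A, fun _ => B, fun _ => hA, fun _ => hB, by simp⟩

lemma isSep_one : IsSep (1 : Mat dA dB) := by
  simpa using isSep_kronecker (PosSemidef.one (n := Fin dA)) (PosSemidef.one (n := Fin dB))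

lemma IsSep.add {E F : Mat dA dB} (hE : IsSep E) (hF : IsSep F) : IsSep (E + F) := by
  obtain ⟨n, A, B, hA, hB, rfl⟩ := hE
  obtain ⟨m, A', B', hA', hB', rfl⟩ := hF
  refine ⟨n + m, Fin.append A A', Fin.append B B', fun l => ?_, fun l => ?_, ?_⟩
  · exact Fin.addCases (by simpa using hA) (by simpa using hA') l
  · exact Fin.addCases (by simpa using hB) (by simpa using hB') l
  · simp [Fin.sum_univ_add]

lemma isSep_sum {ι : Type*} (s : Finset ι) {E : ι → Mat dA dB} (h : ∀ i ∈ s, IsSep (E i)) :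
    IsSep (∑ i ∈ s, E i) :=
  Finset.sum_induction E IsSep (fun _ _ => IsSep.add) isSep_zero h

lemma IsSep.ofReal_smul {E : Mat dA dB} (hE : IsSep E) {c : ℝ} (hc : 0 ≤ c) :
    IsSep ((c : ℂ) • E) := by
  obtain ⟨n, A, B, hA, hB, rfl⟩ := hE
  refine ⟨n, fun l => (c : ℂ) • A l, B, fun l => (hA l).smul (Complex.zero_le_real.mpr hc), hB,
    ?_⟩
  simp [Finset.smul_sum, smul_kronecker]

lemma IsSep.pi_single {ι : Type*} [DecidableEq ι] {X : Mat dA dB} (hX : IsSep X) (i ω : ι) :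
    IsSep ((Pi.single i X : ι → Mat dA dB) ω) := by
  rw [Pi.single_apply]
  split_ifs
  exacts [hX, isSep_zero]

lemma IsSep.posSemidef {E : Mat dA dB} (hE : IsSep E) : E.PosSemidef := by
  obtain ⟨n, A, B, hA, hB, rfl⟩ := hE
  exact posSemidef_sum _ fun l _ => (hA l).kronecker (hB l)

lemma isSep_smul_one_sub_kronecker {A : Matrix (Fin dA) (Fin dA) ℂ}
    {B : Matrix (Fin dB) (Fin dB) ℂ} {α β : ℝ} (hA : A.PosSemidef)
    (hαA : ((α : ℂ) • 1 - A).PosSemidef) (hβ : 0 ≤ β) (hβB : ((β : ℂ) • 1 - B).PosSemidef) :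
    IsSep (((α * β : ℝ) : ℂ) • 1 - kroneckerMap (· * ·) A B) := by
  have hβ1 : ((β : ℂ) • (1 : Matrix (Fin dB) (Fin dB) ℂ)).PosSemidef :=
    PosSemidef.one.smul (Complex.zero_le_real.mpr hβ)
  have hsplit : ((α * β : ℝ) : ℂ) • (1 : Mat dA dB) - kroneckerMap (· * ·) A B =
      kroneckerMap (· * ·) ((α : ℂ) • 1 - A) ((β : ℂ) • 1) +
        kroneckerMap (· * ·) A ((β : ℂ) • 1 - B) := by
    ext ⟨i, k⟩ ⟨j, l⟩
    simp only [Matrix.sub_apply, Matrix.add_apply, Matrix.smul_apply, kroneckerMap_apply,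
      one_apply, smul_eq_mul]
    by_cases hij : i = j <;> by_cases hkl : k = l <;> simp [hij, hkl] <;> ring
  rw [hsplit]
  exact (isSep_kronecker hαA hβ1).add (isSep_kronecker hA hβB)

lemma IsSep.exists_pos_isSep_one_sub_smul {F : Mat dA dB} (hF : IsSep F) :
    ∃ t : ℝ, 0 < t ∧ IsSep (1 - (t : ℂ) • F) := by
  obtain ⟨n, A, B, hA, hB, rfl⟩ := hF
  choose α hα hαA using fun l => (hA l).isHermitian.exists_posSemidef_smul_one_sub
  choose β hβ hβB using fun l => (hB l).isHermitian.exists_posSemidef_smul_one_sub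
  set T := ∑ l, α l * β l
  have hT : 0 < 1 + T := by
    have : 0 ≤ T := Finset.sum_nonneg fun l _ => mul_nonneg (hα l) (hβ l)
    linarith
  have hdecomp : 1 + ∑ l, (((α l * β l : ℝ) : ℂ) • (1 : Mat dA dB) -
      kroneckerMap (· * ·) (A l) (B l)) =
        ((1 + T : ℝ) : ℂ) • 1 - ∑ l, kroneckerMap (· * ·) (A l) (B l) := by
    rw [Finset.sum_sub_distrib, ← Finset.sum_smul, ← Complex.ofReal_sum, Complex.ofReal_add,
      Complex.ofReal_one, add_smul, one_smul, add_sub_assoc]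
  refine ⟨(1 + T)⁻¹, inv_pos.mpr hT, ?_⟩
  have hsep := (isSep_one.add (isSep_sum Finset.univ fun l _ =>
    isSep_smul_one_sub_kronecker (hA l) (hαA l) (hβ l) (hβB l))).ofReal_smul (inv_pos.mpr hT).le
  rwa [hdecomp, smul_sub, smul_smul, ← Complex.ofReal_mul, inv_mul_cancel₀ hT.ne',
    Complex.ofReal_one, one_smul] at hsep

lemma exists_isSep_re_trace_mul_neg_of_not_inSEPdual {E : Mat dA dB} (hE : E.IsHermitian)
    (h : ¬ InSEPdual E) : ∃ F, IsSep F ∧ (E * F).trace.re < 0 := by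
  simp only [InSEPdual, hE, true_and, not_forall] at h
  obtain ⟨F, hF, hneg⟩ := h
  have him := hE.im_trace_mul_eq_zero hF.posSemidef.isHermitian
  exact ⟨F, hF, not_le.mp fun hre => hneg (Complex.le_def.mpr ⟨hre, him.symm⟩)⟩

lemma sum_mul_re_trace_mul_pi_single {ι n : Type*} [Fintype ι] [DecidableEq ι] [Fintype n]
    (w : ι → ℝ) (ρ : ι → Matrix n n ℂ) (i : ι) (X : Matrix n n ℂ) :
    ∑ ω, w ω * (ρ ω * (Pi.single i X : ι → Matrix n n ℂ) ω).trace.re =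
      w i * (ρ i * X).trace.re := by
  rw [Finset.sum_eq_single i (fun j _ hj => by simp [hj]) (by simp)]
  simp

theorem exists_isSep_povm_of_re_trace_mul_neg {ι : Type*} [Fintype ι] [DecidableEq ι]
    (w : ι → ℝ) (ρ : ι → Mat dA dB) {μ ν : ι} (hρμ : (ρ μ).trace = 1) {F : Mat dA dB}
    (hF : IsSep F) (hneg : (((w μ : ℂ) • ρ μ - (w ν : ℂ) • ρ ν) * F).trace.re < 0) :
    ∃ M : ι → Mat dA dB, (∀ ω, IsSep (M ω)) ∧ (∀ ω, (M ω).PosSemidef) ∧ ∑ ω, M ω = 1 ∧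
      w μ < ∑ ω, w ω * (ρ ω * M ω).trace.re := by
  obtain ⟨t, ht, hsep⟩ := hF.exists_pos_isSep_one_sub_smul
  set M : ι → Mat dA dB := Pi.single ν ((t : ℂ) • F) + Pi.single μ (1 - (t : ℂ) • F)
  have hM : ∀ ω, IsSep (M ω) := fun ω =>
    ((hF.ofReal_smul ht.le).pi_single ν ω).add (hsep.pi_single μ ω)
  refine ⟨M, hM, fun ω => (hM ω).posSemidef, ?_, ?_⟩
  · simp [M, Finset.sum_add_distrib]
  · simp only [M, Pi.add_apply, mul_add, trace_add, Complex.add_re, Finset.sum_add_distrib,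
      sum_mul_re_trace_mul_pi_single]
    have hgain : w ν * (ρ ν * (t : ℂ) • F).trace.re + w μ * (ρ μ * (1 - (t : ℂ) • F)).trace.re =
        w μ - t * (((w μ : ℂ) • ρ μ - (w ν : ℂ) • ρ ν) * F).trace.re := by
      simp only [Matrix.mul_sub, Matrix.sub_mul, Matrix.mul_smul, Matrix.smul_mul, Matrix.mul_one,
        trace_sub, trace_smul, hρμ, smul_eq_mul, Complex.sub_re, Complex.re_ofReal_mul,
        Complex.one_re]
      ring
    rw [hgain]
    linarith [mul_neg_of_pos_of_neg ht hneg]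

end Separable

theorem pi_sep_optimality_only_if_general {dA dB : ℕ}
    (η : Fin 4 → ℝ) (ρ : Fin 4 → Mat dA dB)
    (hη : ∀ i, 0 < η i)
    (hρ : ∀ i, (ρ i).PosSemidef ∧ (ρ i).trace = 1)
    (s c : Fin 2 → Fin 4)
    (ηt : Fin 2 × Fin 2 → ℝ) (ρt : Fin 2 × Fin 2 → Mat dA dB)
    (hρt : ∀ ω, ρt ω = (((η (s ω.1) + η (c ω.2) : ℝ) : ℂ))⁻¹ •
        ((η (s ω.1) : ℂ) • ρ (s ω.1) + (η (c ω.2) : ℂ) • ρ (c ω.2)))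
    (μ ωc : Fin 2 × Fin 2)
    (hnot : ¬ InSEPdual ((ηt μ : ℂ) • ρt μ - (ηt ωc : ℂ) • ρt ωc)) :
    ∃ M : Fin 2 × Fin 2 → Mat dA dB, (∀ ω, IsSep (M ω)) ∧
      (∀ ω, (M ω).PosSemidef) ∧ ∑ ω, M ω = 1 ∧
      ηt μ < ∑ ω, ηt ω * ((ρt ω * M ω).trace).re := by
  have hherm : ∀ ω, (ρt ω).IsHermitian := fun ω => by
    rw [hρt ω]
    exact (hρ _).1.isHermitian.normalized_mixture (hρ _).1.isHermitian
  have htrace : (ρt μ).trace = 1 := by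
    rw [hρt μ]
    exact trace_normalized_mixture (hρ _).2 (hρ _).2 (add_pos (hη _) (hη _)).ne'
  obtain ⟨F, hF, hneg⟩ := exists_isSep_re_trace_mul_neg_of_not_inSEPdual
    (((hherm μ).smul (Complex.conj_ofReal _)).sub ((hherm ωc).smul (Complex.conj_ofReal _))) hnot
  exact exists_isSep_povm_of_re_trace_mul_neg ηt ρt htrace hF hneg

theorem pi_sep_optimality_only_if {dA dB : ℕ}
    (η : Fin 4 → ℝ) (ρ : Fin 4 → Mat dA dB)
    (hη : ∀ i, 0 < η i) (hsum : ∑ i, η i = 1)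
    (hρ : ∀ i, (ρ i).PosSemidef ∧ (ρ i).trace = 1)
    (s c : Fin 2 → Fin 4) (hbij : Function.Bijective (Sum.elim s c))
    (ηt : Fin 2 × Fin 2 → ℝ) (ρt : Fin 2 × Fin 2 → Mat dA dB)
    (hηt : ∀ ω, ηt ω = (η (s ω.1) + η (c ω.2)) / 2)
    (hρt : ∀ ω, ρt ω = (((η (s ω.1) + η (c ω.2) : ℝ) : ℂ))⁻¹ •
        ((η (s ω.1) : ℂ) • ρ (s ω.1) + (η (c ω.2) : ℂ) • ρ (c ω.2)))
    (μ ωc : Fin 2 × Fin 2)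
    (hnot : ¬ InSEPdual ((ηt μ : ℂ) • ρt μ - (ηt ωc : ℂ) • ρt ωc)) :
    ∃ M : Fin 2 × Fin 2 → Mat dA dB, (∀ ω, IsSep (M ω)) ∧
      (∀ ω, (M ω).PosSemidef) ∧ ∑ ω, M ω = 1 ∧
      ηt μ < ∑ ω, ηt ω * ((ρt ω * M ω).trace).re :=
  pi_sep_optimality_only_if_general η ρ hη hρ s c ηt ρt hρt μ ωc hnot
end

section
/- (Nonlocality with PI, no-witness direction) Suppose η̃_μ ρ̃_μ − η̃_ω ρ̃_ω is positive semidefinite for all ω ∈ Ω_S. Then every POVM {M̃_ω}_{ω∈Ω_S} satisfies Σ_ω η̃_ω Tr(ρ̃_ω M̃_ω) ≤ η̃_μ, hence p_G^PI(E,S) = 2η̃_μ = p_SEP^PI(E,S) and no nonlocality with PI occurs. -/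
open Matrix
open scoped ComplexOrder

/-! Testing the operator inequality `η̃_μ ρ̃_μ - η̃_ω ρ̃_ω ≥ 0` against the positive element `M̃_ω`
and summing over `ω` gives `η̃_μ Tr(ρ̃_μ Σ_ω M̃_ω) - Σ_ω η̃_ω Tr(ρ̃_ω M̃_ω) ≥ 0`; since `Σ_ω M̃_ω = 1`
and `Tr ρ̃_μ = 1`, this is the bound. The trivial measurement `M̃_μ = 1` attains it. -/

open scoped MatrixOrder in
theorem Matrix.PosSemidef.trace_mul_nonneg_s11 {𝕜 n : Type*} [RCLike 𝕜] [Fintype n]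
    {A B : Matrix n n 𝕜} (hA : A.PosSemidef) (hB : B.PosSemidef) : 0 ≤ (A * B).trace := by
  classical
  obtain ⟨C, rfl⟩ := CStarAlgebra.nonneg_iff_eq_star_mul_self.mp hA.nonneg
  rw [star_eq_conjTranspose, Matrix.mul_assoc, Matrix.trace_mul_comm]
  exact (hB.mul_mul_conjTranspose_same C).trace_nonneg

section Discrimination

variable {ι n : Type*} [Fintype ι] [DecidableEq n]

def IsPOVM (M : ι → Matrix n n ℂ) : Prop :=
  (∀ ω, (M ω).PosSemidef) ∧ ∑ ω, M ω = 1

def successProb [Fintype n] (w : ι → ℝ) (σ : ι → Matrix n n ℂ) (M : ι → Matrix n n ℂ) : ℝ :=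
  ∑ ω, w ω * ((σ ω * M ω).trace).re

theorem isPOVM_pi_single [DecidableEq ι] (μ : ι) : IsPOVM (Pi.single μ (1 : Matrix n n ℂ)) := by
  refine ⟨fun ω => ?_, Finset.sum_pi_single' μ 1 _ |>.trans (if_pos (Finset.mem_univ μ))⟩
  rcases eq_or_ne ω μ with rfl | h
  · simpa using PosSemidef.one
  · simpa [h] using PosSemidef.zero

theorem successProb_pi_single [Fintype n] [DecidableEq ι] (w : ι → ℝ) (σ : ι → Matrix n n ℂ)
    (μ : ι) :
    successProb w σ (Pi.single μ 1) = w μ * (σ μ).trace.re := by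
  rw [successProb, Finset.sum_eq_single μ (fun ω _ h => by simp [h]) (by simp)]
  simp

theorem successProb_le_of_posSemidef_sub [Fintype n] {w : ι → ℝ} {σ : ι → Matrix n n ℂ} {μ : ι}
    (htr : (σ μ).trace = 1) (hdom : ∀ ω, ((w μ : ℂ) • σ μ - (w ω : ℂ) • σ ω).PosSemidef)
    {M : ι → Matrix n n ℂ} (hM : IsPOVM M) : successProb w σ M ≤ w μ := by
  have hgap : 0 ≤ ∑ ω, (((w μ : ℂ) • σ μ - (w ω : ℂ) • σ ω) * M ω).trace :=
    Finset.sum_nonneg fun ω _ => (hdom ω).trace_mul_nonneg_s11 (hM.1 ω)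
  have hexpand : ∑ ω, (((w μ : ℂ) • σ μ - (w ω : ℂ) • σ ω) * M ω).trace
      = w μ - ∑ ω, (w ω : ℂ) * (σ ω * M ω).trace := by
    simp only [Matrix.sub_mul, Matrix.smul_mul, trace_sub, trace_smul, smul_eq_mul,
      Finset.sum_sub_distrib, ← Finset.mul_sum, ← trace_sum, hM.2, htr, mul_one]
  have hgap_re := (Complex.le_def.mp (hexpand ▸ hgap)).1
  simpa [successProb, Complex.re_sum] using hgap_re

end Discrimination

theorem trace_inv_smul_add_smul {n : Type*} [Fintype n] {a b : ℝ} (hab : a + b ≠ 0)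
    {ρ σ : Matrix n n ℂ} (hρ : ρ.trace = 1) (hσ : σ.trace = 1) :
    ((((a + b : ℝ) : ℂ))⁻¹ • ((a : ℂ) • ρ + (b : ℂ) • σ)).trace = 1 := by
  rw [trace_smul, trace_add, trace_smul, trace_smul, hρ, hσ, smul_eq_mul, smul_eq_mul,
    smul_eq_mul, mul_one, mul_one, ← Complex.ofReal_add, inv_mul_cancel₀ (by exact_mod_cast hab)]

theorem pi_no_nonlocality_psd_general {dA dB : ℕ}
    (η : Fin 4 → ℝ) (ρ : Fin 4 → Mat dA dB)
    (hη : ∀ i, 0 < η i)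
    (hρ : ∀ i, (ρ i).PosSemidef ∧ (ρ i).trace = 1)
    (s c : Fin 2 → Fin 4)
    (ηt : Fin 2 × Fin 2 → ℝ) (ρt : Fin 2 × Fin 2 → Mat dA dB)
    (hρt : ∀ ω, ρt ω = (((η (s ω.1) + η (c ω.2) : ℝ) : ℂ))⁻¹ •
        ((η (s ω.1) : ℂ) • ρ (s ω.1) + (η (c ω.2) : ℂ) • ρ (c ω.2)))
    (μ : Fin 2 × Fin 2)
    (hpsd : ∀ ω, ((ηt μ : ℂ) • ρt μ - (ηt ω : ℂ) • ρt ω).PosSemidef) :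
    (∀ M : Fin 2 × Fin 2 → Mat dA dB, (∀ ω, (M ω).PosSemidef) → ∑ ω, M ω = 1 →
        ∑ ω, ηt ω * ((ρt ω * M ω).trace).re ≤ ηt μ) ∧
    (∃ M : Fin 2 × Fin 2 → Mat dA dB, (∀ ω, (M ω).PosSemidef) ∧ ∑ ω, M ω = 1 ∧
        ∑ ω, ηt ω * ((ρt ω * M ω).trace).re = ηt μ) := by
  have htr : (ρt μ).trace = 1 := by
    rw [hρt μ]
    exact trace_inv_smul_add_smul (add_pos (hη _) (hη _)).ne' (hρ _).2 (hρ _).2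
  refine ⟨fun M hM hsum => successProb_le_of_posSemidef_sub htr hpsd ⟨hM, hsum⟩,
    Pi.single μ 1, (isPOVM_pi_single μ).1, (isPOVM_pi_single μ).2, ?_⟩
  rw [← successProb, successProb_pi_single, htr, Complex.one_re, mul_one]

theorem pi_no_nonlocality_psd {dA dB : ℕ}
    (η : Fin 4 → ℝ) (ρ : Fin 4 → Mat dA dB)
    (hη : ∀ i, 0 < η i) (hsum : ∑ i, η i = 1)
    (hρ : ∀ i, (ρ i).PosSemidef ∧ (ρ i).trace = 1)
    (s c : Fin 2 → Fin 4) (hbij : Function.Bijective (Sum.elim s c))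
    (ηt : Fin 2 × Fin 2 → ℝ) (ρt : Fin 2 × Fin 2 → Mat dA dB)
    (hηt : ∀ ω, ηt ω = (η (s ω.1) + η (c ω.2)) / 2)
    (hρt : ∀ ω, ρt ω = (((η (s ω.1) + η (c ω.2) : ℝ) : ℂ))⁻¹ •
        ((η (s ω.1) : ℂ) • ρ (s ω.1) + (η (c ω.2) : ℂ) • ρ (c ω.2)))
    (μ : Fin 2 × Fin 2)
    (hpsd : ∀ ω, ((ηt μ : ℂ) • ρt μ - (ηt ω : ℂ) • ρt ω).PosSemidef) :
    (∀ M : Fin 2 × Fin 2 → Mat dA dB, (∀ ω, (M ω).PosSemidef) → ∑ ω, M ω = 1 →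
        ∑ ω, ηt ω * ((ρt ω * M ω).trace).re ≤ ηt μ) ∧
    (∃ M : Fin 2 × Fin 2 → Mat dA dB, (∀ ω, (M ω).PosSemidef) ∧ ∑ ω, M ω = 1 ∧
        ∑ ω, ηt ω * ((ρt ω * M ω).trace).re = ηt μ) :=
  pi_no_nonlocality_psd_general η ρ hη hρ s c ηt ρt hρt μ hpsd
end
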